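/- Let n ≥ 2 be a natural number and let edges of a rooted binary tree of depth at most log₂ n be partitioned into levels S_0, ..., S_{L-1} with L ≤ log₂ n, where the total edge length in each level is at most 1. Define the allocation B(e) = (1/L)·ℓ(e)/(∑_{e'∈S_i} ℓ(e')) for e ∈ S_i. Then ∑_e B(e) ≤ 1 and the weight ℓ(e)/B(e) of each edge is at most L, so every root-to-leaf path has weighted length at most L² ≤ (log₂ n)². -/

import Mathlib

/-!
Give every level the same share `a` of the budget and split it within the level proportionally
to length. Then edge `e` on level `i` gets weight `ℓ e / B e = ℓ(S_i) / a ≤ 1 / a`, and the total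
budget is at most `a` per level. With `a = 1 / L` the budget is at most `1`, every edge weighs at
most `L`, and a path meeting at most `L` edges weighs at most `L² ≤ (log₂ n)²`.
-/

open Real Finset

section LevelBudget

variable {E ι : Type*} [Fintype E] [DecidableEq ι]

def levelLength (lvl : E → ι) (ℓ : E → ℝ) (i : ι) : ℝ :=
  ∑ e ∈ univ.filter (fun e => lvl e = i), ℓ e

variable {lvl : E → ι} {ℓ : E → ℝ} {B : E → ℝ} {a : ℝ}

theorem levelLength_pos (hℓ : ∀ e, 0 < ℓ e) (e : E) : 0 < levelLength lvl ℓ (lvl e) :=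
  sum_pos (fun x _ => hℓ x) ⟨e, mem_filter.2 ⟨mem_univ e, rfl⟩⟩

theorem sum_budget_level_le (ha : 0 ≤ a)
    (hB : ∀ e, B e = a * ℓ e / levelLength lvl ℓ (lvl e)) (i : ι) :
    ∑ e ∈ univ.filter (fun e => lvl e = i), B e ≤ a :=
  calc ∑ e ∈ univ.filter (fun e => lvl e = i), B e
      = a * levelLength lvl ℓ i / levelLength lvl ℓ i := by
        rw [levelLength, mul_sum, sum_div]
        refine sum_congr rfl fun e he => ?_
        rw [hB, (mem_filter.1 he).2]
        rfl
    _ = a * (levelLength lvl ℓ i / levelLength lvl ℓ i) := mul_div_assoc _ _ _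
    _ ≤ a := mul_le_of_le_one_right ha (div_self_le_one _)

theorem sum_budget_le [Fintype ι] (ha : 0 ≤ a)
    (hB : ∀ e, B e = a * ℓ e / levelLength lvl ℓ (lvl e)) :
    ∑ e, B e ≤ Fintype.card ι * a :=
  calc ∑ e, B e = ∑ i, ∑ e ∈ univ.filter (fun e => lvl e = i), B e := (sum_fiberwise _ _ _).symm
    _ ≤ ∑ _i : ι, a := sum_le_sum fun i _ => sum_budget_level_le ha hB i
    _ = Fintype.card ι * a := by rw [sum_const, card_univ, nsmul_eq_mul]

theorem length_div_budget_eq (hℓ : ∀ e, 0 < ℓ e)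
    (hB : ∀ e, B e = a * ℓ e / levelLength lvl ℓ (lvl e)) (e : E) :
    ℓ e / B e = levelLength lvl ℓ (lvl e) / a := by
  have := (hℓ e).ne'
  have := (levelLength_pos (lvl := lvl) hℓ e).ne'
  rw [hB]
  field_simp

theorem length_div_budget_le (hℓ : ∀ e, 0 < ℓ e) (hlevel : ∀ i, levelLength lvl ℓ i ≤ 1)
    (ha : 0 ≤ a) (hB : ∀ e, B e = a * ℓ e / levelLength lvl ℓ (lvl e)) (e : E) :
    ℓ e / B e ≤ 1 / a := by
  rw [length_div_budget_eq hℓ hB]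
  exact div_le_div_of_nonneg_right (hlevel _) ha

end LevelBudget

theorem stmt_9_general (n L : ℕ)
    (hLlog : (L : ℝ) ≤ Real.logb 2 n)
    (E : Type*) [Fintype E]
    (lvl : E → Fin L) (ℓ : E → ℝ) (hℓ : ∀ e, 0 < ℓ e)
    (hlevel : ∀ i : Fin L, (∑ e ∈ Finset.univ.filter (fun e => lvl e = i), ℓ e) ≤ 1)
    (B : E → ℝ)
    (hB : ∀ e, B e = (1 / L) * ℓ e / (∑ e' ∈ Finset.univ.filter (fun e' => lvl e' = lvl e), ℓ e')) :
    (∑ e, B e) ≤ 1 ∧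
    (∀ e, ℓ e / B e ≤ L) ∧
    (∀ P : Finset E, P.card ≤ L → (∑ e ∈ P, ℓ e / B e) ≤ (L : ℝ) ^ 2) ∧
    ((L : ℝ) ^ 2 ≤ (Real.logb 2 n) ^ 2) := by
  have hweight : ∀ e, ℓ e / B e ≤ L := fun e => by
    simpa using length_div_budget_le hℓ hlevel (by positivity) hB e
  refine ⟨?_, hweight, fun P hP => ?_, pow_le_pow_left₀ L.cast_nonneg hLlog 2⟩
  · calc ∑ e, B e ≤ Fintype.card (Fin L) * (1 / L : ℝ) := sum_budget_le (by positivity) hB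
      _ ≤ 1 := by
        rw [Fintype.card_fin, mul_one_div]
        exact div_self_le_one _
  · calc ∑ e ∈ P, ℓ e / B e ≤ P.card • (L : ℝ) := sum_le_card_nsmul _ _ _ fun e _ => hweight e
      _ ≤ L * L := by
        rw [nsmul_eq_mul]
        gcongr
      _ = (L : ℝ) ^ 2 := (sq _).symm

theorem stmt_9 (n L : ℕ) (hn : 2 ≤ n) (hL : 0 < L)
    (hLlog : (L : ℝ) ≤ Real.logb 2 n)
    (E : Type*) [Fintype E] [DecidableEq E]
    (lvl : E → Fin L) (ℓ : E → ℝ) (hℓ : ∀ e, 0 < ℓ e)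
    (hlevel : ∀ i : Fin L, (∑ e ∈ Finset.univ.filter (fun e => lvl e = i), ℓ e) ≤ 1)
    (B : E → ℝ)
    (hB : ∀ e, B e = (1 / L) * ℓ e / (∑ e' ∈ Finset.univ.filter (fun e' => lvl e' = lvl e), ℓ e')) :
    (∑ e, B e) ≤ 1 ∧
    (∀ e, ℓ e / B e ≤ L) ∧
    (∀ P : Finset E, P.card ≤ L → (∑ e ∈ P, ℓ e / B e) ≤ (L : ℝ) ^ 2) ∧
    ((L : ℝ) ^ 2 ≤ (Real.logb 2 n) ^ 2) :=
  stmt_9_general n L hLlog E lvl ℓ hℓ hlevel B hB
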